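/- arXiv:1302.6183 — 2 statements merged into one kernel-verified Lean document; each statement's English description precedes it below -/
import Mathlib

section
/- Let G and H be finite simple graphs on the same vertex set V with every edge of H an edge of G. Then there exist integers r ≥ 1, t ≥ 0 and a map c : V → {1,...,r} ⊆ ℤ such that for every edge {u,v} of G, {u,v} is an edge of H if and only if |c(u) − c(v)| ≤ t, precisely when there exists a simple graph H* on V such that (i) every edge of H is an edge of H*, (ii) every edge of H* is either an edge of H or a non-edge of G, and (iii) H* has a unit interval representation. -/
/-!
Both sides are equivalent to the existence of `x : V → ℝ` such that an edge `uv` of `G` lies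
in `H` iff `|x u - x v| ≤ 1`. An integer coloring with threshold `t` gives such an `x` after
division by `t + 1/2`, and then `H*` is the graph of pairs at distance at most `1` under `x`.
Conversely, a unit interval representation `f` of `H*` is such an `x`; to make it an integer
coloring, multiply by `N` so large that `N` times the least excess over `1` among the finitely
many distances `|f u - f v| > 1` exceeds `1`, round up, and translate into `[1, r]`.
-/

open Filter Topology Set

theorem Set.Icc_inter_Icc_add_nonempty_iff {α : Type*} [AddCommGroup α] [LinearOrder α]
    [IsOrderedAddMonoid α] (a b d : α) :
    (Icc a (a + d) ∩ Icc b (b + d)).Nonempty ↔ |a - b| ≤ d := by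
  rw [Icc_inter_Icc, nonempty_Icc, abs_sub_le_iff, sup_le_iff, le_inf_iff, le_inf_iff,
    sub_le_iff_le_add', sub_le_iff_le_add']
  constructor
  · rintro ⟨⟨-, h₁⟩, h₂, -⟩
    exact ⟨h₁, h₂⟩
  · rintro ⟨h₁, h₂⟩
    have hd : 0 ≤ d := by
      rcases le_total a b with hab | hab
      · exact le_add_iff_nonneg_right a |>.1 (hab.trans h₂)
      · exact le_add_iff_nonneg_right b |>.1 (hab.trans h₁)
    exact ⟨⟨le_add_of_nonneg_right hd, h₁⟩, h₂, le_add_of_nonneg_right hd⟩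

theorem Finite.exists_gt_forall_le_of_lt {ι α : Type*} [Finite ι] [LinearOrder α]
    [TopologicalSpace α] [OrderTopology α] [DenselyOrdered α] [NoMaxOrder α]
    (s : ι → α) (a : α) : ∃ δ, a < δ ∧ ∀ i, a < s i → δ ≤ s i := by
  have hδ : ∀ᶠ δ in 𝓝[>] a, ∀ i, a < s i → δ ≤ s i := by
    refine eventually_all.2 fun i => ?_
    by_cases hi : a < s i
    · exact eventually_nhdsWithin_of_eventually_nhds
        ((eventually_le_nhds hi).mono fun _ h _ => h)
    · exact Eventually.of_forall fun _ h => absurd h hi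
  exact (eventually_mem_nhdsWithin.and hδ).exists

theorem Int.abs_ceil_sub_ceil_le {R : Type*} [Ring R] [LinearOrder R] [IsStrictOrderedRing R]
    [FloorRing R] {a b : R} {n : ℤ} (h : |a - b| ≤ n) : |⌈a⌉ - ⌈b⌉| ≤ n := by
  obtain ⟨h₁, h₂⟩ := abs_sub_le_iff.1 h
  rw [abs_sub_le_iff, sub_le_iff_le_add', sub_le_iff_le_add', ← ceil_add_intCast,
    ← ceil_add_intCast]
  exact ⟨ceil_mono (sub_le_iff_le_add'.1 h₁), ceil_mono (sub_le_iff_le_add'.1 h₂)⟩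

theorem Int.abs_sub_lt_of_abs_ceil_sub_ceil_le {R : Type*} [Field R] [LinearOrder R]
    [IsStrictOrderedRing R] [FloorRing R] {a b : R} {n : ℤ} (h : |⌈a⌉ - ⌈b⌉| ≤ n) :
    |a - b| < n + 1 := by
  have h' : |(⌈a⌉ : R) - ⌈b⌉| ≤ n := by exact_mod_cast h
  obtain ⟨h₁, h₂⟩ := abs_sub_le_iff.1 h'
  rw [abs_sub_lt_iff]
  constructor <;> linarith [le_ceil a, le_ceil b, ceil_lt_add_one a, ceil_lt_add_one b]

theorem exists_int_abs_sub_le_iff_abs_sub_le_one {V : Type*} [Finite V] (f : V → ℝ) :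
    ∃ (N : ℕ) (g : V → ℤ), ∀ u v, |f u - f v| ≤ 1 ↔ |g u - g v| ≤ N := by
  obtain ⟨δ, hδ, hgap⟩ := Finite.exists_gt_forall_le_of_lt (fun p : V × V => |f p.1 - f p.2|) 1
  obtain ⟨N, hN⟩ := exists_nat_gt (1 / (δ - 1))
  have hNδ : 1 < N * (δ - 1) := by rwa [div_lt_iff₀ (sub_pos.2 hδ)] at hN
  have habs (u v : V) : |N * f u - N * f v| = N * |f u - f v| := by
    rw [← mul_sub, abs_mul, Nat.abs_cast]
  refine ⟨N, fun v => ⌈N * f v⌉, fun u v => ⟨fun h => ?_, fun h => ?_⟩⟩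
  · refine Int.abs_ceil_sub_ceil_le ?_
    rw [habs, Int.cast_natCast]
    exact mul_le_of_le_one_right N.cast_nonneg h
  · by_contra hlt
    -- the gap `N * (δ - 1) > 1` survives rounding, which moves differences by less than `1`
    have hfar : δ ≤ |f u - f v| := hgap (u, v) (not_le.1 hlt)
    have hnear := Int.abs_sub_lt_of_abs_ceil_sub_ceil_le h
    rw [habs, Int.cast_natCast] at hnear
    nlinarith

theorem exists_translate_mem_Icc {V : Type*} [Finite V] (g : V → ℤ) :
    ∃ r, 1 ≤ r ∧ ∃ c : V → ℤ, (∀ v, 1 ≤ c v ∧ c v ≤ r) ∧ ∀ u v, c u - c v = g u - g v := by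
  obtain ⟨B, hB⟩ := (Set.finite_range fun v => |g v|).bddAbove
  have hB' (v : V) : |g v| ≤ max B 0 := (hB ⟨v, rfl⟩).trans (le_max_left _ _)
  refine ⟨2 * max B 0 + 1, le_add_of_nonneg_left (by positivity), fun v => g v + max B 0 + 1,
    fun v => ?_, fun u v => by ring⟩
  have := abs_le.1 (hB' v)
  constructor <;> dsimp only <;> omega

namespace SimpleGraph

variable {V : Type*}

def IsUnitThresholdMap (G H : SimpleGraph V) (x : V → ℝ) : Prop :=
  ∀ u v, G.Adj u v → (H.Adj u v ↔ |x u - x v| ≤ 1)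

def unitIntervalGraph (f : V → ℝ) : SimpleGraph V where
  Adj u v := u ≠ v ∧ |f u - f v| ≤ 1
  symm := ⟨fun _ _ h => ⟨h.1.symm, abs_sub_comm (f _) _ ▸ h.2⟩⟩
  loopless := ⟨fun _ h => h.1 rfl⟩

theorem unitIntervalGraph_adj {f : V → ℝ} {u v : V} :
    (unitIntervalGraph f).Adj u v ↔ u ≠ v ∧ |f u - f v| ≤ 1 :=
  Iff.rfl

theorem unitIntervalGraph_adj_iff_Icc_inter_nonempty {f : V → ℝ} {u v : V} (huv : u ≠ v) :
    (unitIntervalGraph f).Adj u v ↔ (Icc (f u) (f u + 1) ∩ Icc (f v) (f v + 1)).Nonempty := by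
  rw [Icc_inter_Icc_add_nonempty_iff, unitIntervalGraph_adj, and_iff_right huv]

variable {G H : SimpleGraph V}

theorem isUnitThresholdMap_of_threshold {c : V → ℤ} {t : ℤ} (ht : 0 ≤ t)
    (hc : ∀ u v, G.Adj u v → (H.Adj u v ↔ |c u - c v| ≤ t)) :
    G.IsUnitThresholdMap H fun v => c v / (t + 1 / 2 : ℝ) := by
  have hpos : (0 : ℝ) < t + 1 / 2 := by positivity
  intro u v huv
  rw [hc u v huv, div_sub_div_same, abs_div, abs_of_pos hpos, div_le_one hpos]
  -- `t + 1/2` separates the integers `≤ t` from those `≥ t + 1`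
  constructor
  · intro h
    have : ((|c u - c v| : ℤ) : ℝ) ≤ t := by exact_mod_cast h
    push_cast at this
    linarith
  · intro h
    have : ((|c u - c v| : ℤ) : ℝ) < t + 1 := by push_cast; linarith
    exact Int.lt_add_one_iff.1 (by exact_mod_cast this)

theorem IsUnitThresholdMap.exists_threshold [Finite V] {x : V → ℝ}
    (hx : G.IsUnitThresholdMap H x) :
    ∃ (r t : ℤ), 1 ≤ r ∧ 0 ≤ t ∧ ∃ c : V → ℤ, (∀ v, 1 ≤ c v ∧ c v ≤ r) ∧
      ∀ u v, G.Adj u v → (H.Adj u v ↔ |c u - c v| ≤ t) := by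
  obtain ⟨N, g, hg⟩ := exists_int_abs_sub_le_iff_abs_sub_le_one x
  obtain ⟨r, hr, c, hcr, hcg⟩ := exists_translate_mem_Icc g
  refine ⟨r, N, hr, N.cast_nonneg, c, hcr, fun u v huv => ?_⟩
  rw [hx u v huv, hg, hcg]

theorem IsUnitThresholdMap.exists_unitIntervalGraph (hHG : H ≤ G) {x : V → ℝ}
    (hx : G.IsUnitThresholdMap H x) :
    ∃ Hstar : SimpleGraph V, H ≤ Hstar ∧ (∀ u v, Hstar.Adj u v → (H.Adj u v ∨ ¬ G.Adj u v)) ∧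
      ∃ f : V → ℝ, ∀ u v, u ≠ v →
        (Hstar.Adj u v ↔ (Icc (f u) (f u + 1) ∩ Icc (f v) (f v + 1)).Nonempty) := by
  refine ⟨unitIntervalGraph x, fun u v h => unitIntervalGraph_adj.2 ⟨h.ne, (hx u v (hHG h)).1 h⟩,
    fun u v h => ?_, x, fun u v => unitIntervalGraph_adj_iff_Icc_inter_nonempty⟩
  by_cases huv : G.Adj u v
  · exact .inl ((hx u v huv).2 (unitIntervalGraph_adj.1 h).2)
  · exact .inr huv

theorem isUnitThresholdMap_of_unitInterval {Hstar : SimpleGraph V} (hH : H ≤ Hstar)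
    (hHstar : ∀ u v, Hstar.Adj u v → (H.Adj u v ∨ ¬ G.Adj u v)) {f : V → ℝ}
    (hf : ∀ u v, u ≠ v → (Hstar.Adj u v ↔ (Icc (f u) (f u + 1) ∩ Icc (f v) (f v + 1)).Nonempty)) :
    G.IsUnitThresholdMap H f := by
  intro u v huv
  rw [← Icc_inter_Icc_add_nonempty_iff, ← hf u v huv.ne]
  exact ⟨fun h => hH h, fun h => (hHstar u v h).resolve_right (not_not.2 huv)⟩

end SimpleGraph

/-- For finite simple graphs `H ≤ G` on the same vertex set, `G` admits an
`(r,t)`-threshold-coloring with respect to the spanning subgraph `H` if and only if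
there is a graph `H*` on `V` with `H ≤ H*`, every edge of `H*` an edge of `H` or a
non-edge of `G`, and `H*` has a unit interval representation. -/
theorem stmt2 {V : Type*} [Fintype V] (G H : SimpleGraph V) (hHG : H ≤ G) :
    (∃ (r t : ℤ), 1 ≤ r ∧ 0 ≤ t ∧
      ∃ c : V → ℤ, (∀ v, 1 ≤ c v ∧ c v ≤ r) ∧
        ∀ u v : V, G.Adj u v → (H.Adj u v ↔ |c u - c v| ≤ t)) ↔
    (∃ Hstar : SimpleGraph V,
      H ≤ Hstar ∧
      (∀ u v : V, Hstar.Adj u v → (H.Adj u v ∨ ¬ G.Adj u v)) ∧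
      ∃ f : V → ℝ, ∀ u v : V, u ≠ v →
        (Hstar.Adj u v ↔ (Set.Icc (f u) (f u + 1) ∩ Set.Icc (f v) (f v + 1)).Nonempty)) := by
  constructor
  · rintro ⟨r, t, -, ht, c, -, hc⟩
    exact (SimpleGraph.isUnitThresholdMap_of_threshold ht hc).exists_unitIntervalGraph hHG
  · rintro ⟨Hstar, hH, hHstar, f, hf⟩
    exact (SimpleGraph.isUnitThresholdMap_of_unitInterval hH hHstar hf).exists_threshold
end

section
/- Let T be a star with center v all of whose prongs have length 2 or 3, with at most three prongs of length 2. Then T is reducible: for every Boolean edge-labeling of T (true meaning near) and every assignment of colors in {0,...,7} to the leaves of T, there exist a color c(v) ∈ {0,...,7} and colors in {0,...,7} for all internal vertices of the prongs such that every edge {x,y} of T labeled true satisfies |c(x) − c(y)| ≤ 2 and every edge labeled false satisfies |c(x) − c(y)| > 2. -/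
/-!
Only the centre colours `1, 3, 4, 6` are used. From each of them every 3-prong can be
completed, whatever its labels and leaf colour. A 2-prong can fail for at most one of these
four centre colours, so at most three 2-prongs rule out at most three of them and some
centre colour works for all prongs at once. Both facts about prongs are finite checks.
-/

def goodCenters : Finset (Fin 8) := {1, 3, 4, 6}

def TwoProngExtends (c b : Fin 8) (p₁ p₂ : Bool) : Prop :=
  ∃ x : Fin 8, (|(c : ℤ) - x| ≤ 2 ↔ p₁ = true) ∧ (|(x : ℤ) - b| ≤ 2 ↔ p₂ = true)

def ThreeProngExtends (c a : Fin 8) (q₁ q₂ q₃ : Bool) : Prop :=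
  ∃ y z : Fin 8, (|(c : ℤ) - y| ≤ 2 ↔ q₁ = true) ∧ (|(y : ℤ) - z| ≤ 2 ↔ q₂ = true) ∧
    (|(z : ℤ) - a| ≤ 2 ↔ q₃ = true)

theorem threeProngExtends_of_mem_goodCenters {c : Fin 8} (hc : c ∈ goodCenters)
    (a : Fin 8) (q₁ q₂ q₃ : Bool) : ThreeProngExtends c a q₁ q₂ q₃ := by
  revert c a q₁ q₂ q₃
  unfold goodCenters ThreeProngExtends
  decide

theorem twoProngExtends_or_of_ne {c c' : Fin 8} (hc : c ∈ goodCenters)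
    (hc' : c' ∈ goodCenters) (hne : c ≠ c') (b : Fin 8) (p₁ p₂ : Bool) :
    TwoProngExtends c b p₁ p₂ ∨ TwoProngExtends c' b p₁ p₂ := by
  revert c c' b p₁ p₂
  unfold goodCenters TwoProngExtends
  decide

theorem Finset.exists_mem_forall_of_card_lt {α ι : Type*} [Fintype ι] (s : Finset α)
    (P : ι → α → Prop) (hP : ∀ i, ∀ c ∈ s, ∀ c' ∈ s, c ≠ c' → P i c ∨ P i c')
    (hcard : Fintype.card ι < s.card) : ∃ c ∈ s, ∀ i, P i c := by
  by_contra! h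
  choose f hf using fun c : s => h c c.2
  obtain ⟨c, c', hne, heq⟩ :=
    Fintype.exists_ne_map_eq_of_card_lt f (by rwa [Fintype.card_coe])
  rcases hP (f c) c c.2 c' c'.2 (Subtype.coe_ne_coe.mpr hne) with hc | hc
  · exact hf c hc
  · exact hf c' (heq ▸ hc)

theorem exists_mem_goodCenters_forall_twoProngExtends {m : ℕ} (hm : m ≤ 3)
    (b : Fin m → Fin 8) (p₁ p₂ : Fin m → Bool) :
    ∃ c ∈ goodCenters, ∀ j, TwoProngExtends c (b j) (p₁ j) (p₂ j) :=
  goodCenters.exists_mem_forall_of_card_lt _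
    (fun j _ hc _ hc' hne => twoProngExtends_or_of_ne hc hc' hne (b j) (p₁ j) (p₂ j))
    (by rw [Fintype.card_fin]; decide +revert)

theorem Fin.exists_intCast_eq {n : ℕ} {k : ℤ} (hk₀ : 0 ≤ k) (hkn : k < n) :
    ∃ u : Fin n, (u : ℤ) = k :=
  ⟨⟨k.toNat, by omega⟩, by simp [hk₀]⟩

theorem Fin.intCast_mem_Icc_zero_seven (u : Fin 8) : 0 ≤ (u : ℤ) ∧ (u : ℤ) ≤ 7 := by
  omega

theorem stmt17_general (m n : ℕ) (hm : m ≤ 3)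
    (p₁ p₂ : Fin m → Bool) (q₁ q₂ q₃ : Fin n → Bool)
    (b : Fin m → ℤ) (hb : ∀ j, 0 ≤ b j ∧ b j ≤ 7)
    (a : Fin n → ℤ) (ha : ∀ i, 0 ≤ a i ∧ a i ≤ 7) :
    ∃ (cv : ℤ) (x : Fin m → ℤ) (y z : Fin n → ℤ),
      (0 ≤ cv ∧ cv ≤ 7) ∧
      (∀ j : Fin m,
        (0 ≤ x j ∧ x j ≤ 7) ∧
        (|cv - x j| ≤ 2 ↔ p₁ j = true) ∧
        (|x j - b j| ≤ 2 ↔ p₂ j = true)) ∧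
      (∀ i : Fin n,
        (0 ≤ y i ∧ y i ≤ 7) ∧ (0 ≤ z i ∧ z i ≤ 7) ∧
        (|cv - y i| ≤ 2 ↔ q₁ i = true) ∧
        (|y i - z i| ≤ 2 ↔ q₂ i = true) ∧
        (|z i - a i| ≤ 2 ↔ q₃ i = true)) := by
  choose B hB using fun j => Fin.exists_intCast_eq (n := 8) (hb j).1 (by have := hb j; omega)
  choose A hA using fun i => Fin.exists_intCast_eq (n := 8) (ha i).1 (by have := ha i; omega)
  obtain ⟨c, hc, htwo⟩ := exists_mem_goodCenters_forall_twoProngExtends hm B p₁ p₂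
  choose x hx₁ hx₂ using htwo
  choose y z hy hyz hz using fun i =>
    threeProngExtends_of_mem_goodCenters hc (A i) (q₁ i) (q₂ i) (q₃ i)
  refine ⟨c, fun j => x j, fun i => y i, fun i => z i, c.intCast_mem_Icc_zero_seven,
    fun j => ⟨(x j).intCast_mem_Icc_zero_seven, hx₁ j, hB j ▸ hx₂ j⟩,
    fun i => ⟨(y i).intCast_mem_Icc_zero_seven, (z i).intCast_mem_Icc_zero_seven,
      hy i, hyz i, hA i ▸ hz i⟩⟩

/-- A star with center `v`, `m` prongs of length 2 (with `m ≤ 3`) and `n` prongs of length 3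
(so `m + n ≥ 3`, as the center of a star has degree ≥ 3) is reducible: for every Boolean
edge-labeling (true = near, threshold 2) and every coloring of the leaves (`b j` for the
`j`-th 2-prong, `a i` for the `i`-th 3-prong) with colors in `{0,…,7}`, there are colors in
`{0,…,7}` for `v` and for all internal vertices realizing every edge label. Here `x j` is
the internal vertex of the `j`-th 2-prong (edge labels `p₁ j` on `v–xⱼ`, `p₂ j` on
`xⱼ–leaf`), and `y i, z i` are the internal vertices of the `i`-th 3-prong (edge labels
`q₁ i` on `v–yᵢ`, `q₂ i` on `yᵢ–zᵢ`, `q₃ i` on `zᵢ–leaf`). -/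
theorem stmt17 (m n : ℕ) (hm : m ≤ 3) (hstar : 3 ≤ m + n)
    (p₁ p₂ : Fin m → Bool) (q₁ q₂ q₃ : Fin n → Bool)
    (b : Fin m → ℤ) (hb : ∀ j, 0 ≤ b j ∧ b j ≤ 7)
    (a : Fin n → ℤ) (ha : ∀ i, 0 ≤ a i ∧ a i ≤ 7) :
    ∃ (cv : ℤ) (x : Fin m → ℤ) (y z : Fin n → ℤ),
      (0 ≤ cv ∧ cv ≤ 7) ∧
      (∀ j : Fin m,
        (0 ≤ x j ∧ x j ≤ 7) ∧
        (|cv - x j| ≤ 2 ↔ p₁ j = true) ∧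
        (|x j - b j| ≤ 2 ↔ p₂ j = true)) ∧
      (∀ i : Fin n,
        (0 ≤ y i ∧ y i ≤ 7) ∧ (0 ≤ z i ∧ z i ≤ 7) ∧
        (|cv - y i| ≤ 2 ↔ q₁ i = true) ∧
        (|y i - z i| ≤ 2 ↔ q₂ i = true) ∧
        (|z i - a i| ≤ 2 ↔ q₃ i = true)) :=
  stmt17_general m n hm p₁ p₂ q₁ q₂ q₃ b hb a ha
end
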